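/- arXiv:1802.05953 — 2 statements merged into one kernel-verified Lean document; each statement's English description precedes it below -/
import Mathlib

section
/- Let G be a minimal counterexample to the statement that all planar graphs have 3-weak-dynamic number at most 6, chosen with the fewest edges and, among those, the fewest vertices. Then G has no pair of adjacent vertices both of degree at least 4. -/
open SimpleGraph

/-- `H` is a minor of `G`: there are nonempty, connected, pairwise disjoint branch sets
in `G`, with an edge of `G` between the branch sets of any two adjacent vertices of `H`. -/
def HasMinor {V W : Type} (G : SimpleGraph V) (H : SimpleGraph W) : Prop :=
  ∃ f : W → Set V,
    (∀ w, (f w).Nonempty) ∧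
    (∀ w, (G.induce (f w)).Connected) ∧
    (∀ w w', w ≠ w' → Disjoint (f w) (f w')) ∧
    (∀ w w', H.Adj w w' → ∃ a ∈ f w, ∃ b ∈ f w', G.Adj a b)

/-- A graph is planar iff it has no `K₅` minor and no `K_{3,3}` minor (Wagner's theorem). -/
def IsPlanar {V : Type} (G : SimpleGraph V) : Prop :=
  ¬ HasMinor G (⊤ : SimpleGraph (Fin 5)) ∧
  ¬ HasMinor G (completeBipartiteGraph (Fin 3) (Fin 3))

/-- The degree of a vertex `v`, the number of its neighbors. -/
noncomputable def deg {V : Type} (G : SimpleGraph V) (v : V) : ℕ :=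
  (G.neighborSet v).ncard

/-- `G` admits a `k`-weak-dynamic coloring with `n` colors: a (not necessarily proper)
coloring such that every vertex `v` sees at least `min k (d v)` colors on its neighborhood. -/
def WDColorable {V : Type} (G : SimpleGraph V) (k n : ℕ) : Prop :=
  ∃ c : V → Fin n, ∀ v, min k (deg G v) ≤ (c '' G.neighborSet v).ncard

/-!
If `uv` is an edge with both ends of degree at least 4, then `G - uv` is planar
with fewer edges, so it has a 3-weak-dynamic 6-coloring. In `G - uv` the vertices `u` and `v`
still have degree at least 3, so they still see 3 colors, and every other vertex keeps its
neighborhood; hence the same coloring works for `G`.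
-/

section

variable {V : Type}

lemma HasMinor.mono {W : Type} {G G' : SimpleGraph V} {H : SimpleGraph W} (hle : G ≤ G')
    (h : HasMinor G H) : HasMinor G' H := by
  obtain ⟨f, hne, hconn, hdisj, hadj⟩ := h
  refine ⟨f, hne, fun w => (hconn w).mono fun _ _ hab => hle hab, hdisj, fun w w' hww' => ?_⟩
  obtain ⟨a, ha, b, hb, hab⟩ := hadj w w' hww'
  exact ⟨a, ha, b, hb, hle hab⟩

lemma IsPlanar.anti {G G' : SimpleGraph V} (hle : G ≤ G') (h : IsPlanar G') : IsPlanar G :=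
  ⟨fun hK5 => h.1 (hK5.mono hle), fun hK33 => h.2 (hK33.mono hle)⟩

lemma WDColorable.of_le {G H : SimpleGraph V} {k n : ℕ} (hle : H ≤ G)
    (hdeg : ∀ w, k ≤ deg H w ∨ H.neighborSet w = G.neighborSet w)
    (hH : WDColorable H k n) : WDColorable G k n := by
  obtain ⟨c, hc⟩ := hH
  refine ⟨c, fun w => ?_⟩
  rcases hdeg w with hk | hnb
  · calc min k (deg G w) ≤ min k (deg H w) := by omega
      _ ≤ (c '' H.neighborSet w).ncard := hc w
      _ ≤ (c '' G.neighborSet w).ncard :=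
        Set.ncard_le_ncard (Set.image_mono (neighborSet_mono hle w)) (Set.toFinite _)
  · simpa only [deg, hnb] using hc w

variable {G : SimpleGraph V} {u v : V}

lemma neighborSet_deleteEdges_edge_left (u v : V) :
    (G.deleteEdges {s(u, v)}).neighborSet u = G.neighborSet u \ {v} := by
  ext x
  simp only [mem_neighborSet, deleteEdges_adj, Set.mem_singleton_iff, Set.mem_sdiff,
    Sym2.eq_iff, true_and, and_congr_right_iff]
  intro hux
  have hxu : x ≠ u := (G.ne_of_adj hux).symm
  tauto

lemma deg_deleteEdges_edge_left (huv : G.Adj u v) :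
    deg (G.deleteEdges {s(u, v)}) u = deg G u - 1 := by
  rw [deg, neighborSet_deleteEdges_edge_left,
    Set.ncard_sdiff_singleton_of_mem (show v ∈ G.neighborSet u from huv), deg]

lemma deg_deleteEdges_edge_right (huv : G.Adj u v) :
    deg (G.deleteEdges {s(u, v)}) v = deg G v - 1 := by
  rw [Sym2.eq_swap]
  exact deg_deleteEdges_edge_left huv.symm

lemma neighborSet_deleteEdges_edge_of_ne {w : V} (hwu : w ≠ u) (hwv : w ≠ v) :
    (G.deleteEdges {s(u, v)}).neighborSet w = G.neighborSet w := by
  ext x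
  simp only [mem_neighborSet, deleteEdges_adj, Set.mem_singleton_iff, Sym2.eq_iff]
  tauto

lemma ncard_edgeSet_deleteEdges_edge_lt [Finite V] (huv : G.Adj u v) :
    (G.deleteEdges {s(u, v)}).edgeSet.ncard < G.edgeSet.ncard := by
  rw [edgeSet_deleteEdges]
  exact Set.ncard_sdiff_singleton_lt_of_mem huv

end

theorem minCounterexample_no_adjacent_deg4_general {V : Type} [Fintype V] (G : SimpleGraph V)
    (hplanar : IsPlanar G) (hcex : ¬ WDColorable G 3 6)
    (hminEdges : ∀ (W : Type) [Fintype W] (H : SimpleGraph W),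
      IsPlanar H → H.edgeSet.ncard < G.edgeSet.ncard → WDColorable H 3 6) :
    ¬ ∃ u v : V, G.Adj u v ∧ 4 ≤ deg G u ∧ 4 ≤ deg G v := by
  rintro ⟨u, v, huv, hdu, hdv⟩
  have hle : G.deleteEdges {s(u, v)} ≤ G := deleteEdges_le _
  have hcolH := hminEdges V _ (hplanar.anti hle) (ncard_edgeSet_deleteEdges_edge_lt huv)
  refine hcex (hcolH.of_le hle fun w => ?_)
  by_cases hwu : w = u
  · subst hwu
    exact Or.inl (by rw [deg_deleteEdges_edge_left huv]; omega)
  by_cases hwv : w = v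
  · subst hwv
    exact Or.inl (by rw [deg_deleteEdges_edge_right huv]; omega)
  exact Or.inr (neighborSet_deleteEdges_edge_of_ne hwu hwv)

/-- A minimal counterexample has no pair of adjacent vertices both of degree at least 4. -/
theorem minCounterexample_no_adjacent_deg4 {V : Type} [Fintype V] (G : SimpleGraph V)
    (hplanar : IsPlanar G) (hcex : ¬ WDColorable G 3 6)
    (hminEdges : ∀ (W : Type) [Fintype W] (H : SimpleGraph W),
      IsPlanar H → H.edgeSet.ncard < G.edgeSet.ncard → WDColorable H 3 6)
    (hminVerts : ∀ (W : Type) [Fintype W] (H : SimpleGraph W),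
      IsPlanar H → ¬ WDColorable H 3 6 → H.edgeSet.ncard = G.edgeSet.ncard →
      Nat.card V ≤ Nat.card W) :
    ¬ ∃ u v : V, G.Adj u v ∧ 4 ≤ deg G u ∧ 4 ≤ deg G v :=
  minCounterexample_no_adjacent_deg4_general G hplanar hcex hminEdges
end

section
/- Let G be a minimal counterexample to the statement that all planar graphs have 3-weak-dynamic number at most 6, chosen with the fewest edges and, among those, the fewest vertices. Then G does not contain distinct vertices v_1, v_2, v_3, v_4 such that v_1v_2v_3 and v_1v_3v_4 are triangles of G (sharing the edge v_1v_3) with d(v_2) = d(v_3) = d(v_4) = 3 and d(v_1) ≥ 4. -/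
open SimpleGraph

lemma hasMinor_mono {V W : Type} {G G' : SimpleGraph V} {H : SimpleGraph W}
    (hle : G ≤ G') (h : HasMinor G H) : HasMinor G' H := by
  obtain ⟨f, h1, h2, h3, h4⟩ := h
  refine ⟨f, h1, fun w => (h2 w).mono (fun a b hab => hle hab), h3, fun w w' hw => ?_⟩
  obtain ⟨a, ha, b, hb, hab⟩ := h4 w w' hw
  exact ⟨a, ha, b, hb, hle hab⟩

lemma isPlanar_mono {V : Type} {G G' : SimpleGraph V} (hle : G ≤ G') (h : IsPlanar G') :
    IsPlanar G :=
  ⟨fun hm => h.1 (hasMinor_mono hle hm), fun hm => h.2 (hasMinor_mono hle hm)⟩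

lemma neighborSet_del_ne {V : Type} (G : SimpleGraph V) {u w : V} (v : V)
    (hu : v ≠ u) (hw : v ≠ w) :
    (G.deleteEdges {s(u,w)}).neighborSet v = G.neighborSet v := by
  ext t
  simp only [mem_neighborSet, deleteEdges_adj, Set.mem_singleton_iff, Sym2.eq_iff]
  tauto

lemma neighborSet_del_left {V : Type} (G : SimpleGraph V) {u w : V} (huw : u ≠ w) :
    (G.deleteEdges {s(u,w)}).neighborSet u = G.neighborSet u \ {w} := by
  ext t
  simp only [mem_neighborSet, deleteEdges_adj, Set.mem_singleton_iff, Sym2.eq_iff,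
    Set.mem_diff]
  tauto

lemma pair_distinct {V : Type} {c : V → Fin 6} {u w : V} (h : 2 ≤ (c '' {u, w}).ncard) :
    c u ≠ c w := by
  intro he
  have him : c '' {u, w} = {c u} := by
    rw [Set.image_insert_eq, Set.image_singleton, ← he, Set.insert_eq_self]
    exact Set.mem_singleton _
  rw [him, Set.ncard_singleton] at h
  omega

lemma triple_distinct {V : Type} {c : V → Fin 6} {u v w : V}
    (h : 3 ≤ (c '' {u, v, w}).ncard) : c u ≠ c v ∧ c u ≠ c w ∧ c v ≠ c w := by
  have him : c '' {u, v, w} = {c u, c v, c w} := by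
    rw [Set.image_insert_eq, Set.image_insert_eq, Set.image_singleton]
  rw [him] at h
  have key : ∀ x y : Fin 6, ({c u, c v, c w} : Set (Fin 6)) ⊆ {x, y} → False := by
    intro x y hsub
    have h2 := Set.ncard_le_ncard hsub (Set.toFinite _)
    have h3 := Set.ncard_insert_le x ({y} : Set (Fin 6))
    rw [Set.ncard_singleton] at h3
    omega
  refine ⟨?_, ?_, ?_⟩ <;> intro he
  · exact key (c v) (c w) (by rintro t (rfl|rfl|rfl) <;> simp [he])
  · exact key (c v) (c w) (by rintro t (rfl|rfl|rfl) <;> simp [he])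
  · exact key (c u) (c w) (by rintro t (rfl|rfl|rfl) <;> simp [he])

lemma exists_fresh {F : Set (Fin 6)} (h : F.ncard ≤ 5) : ∃ a, a ∉ F := by
  by_contra hcon
  push_neg at hcon
  have hsub : (Set.univ : Set (Fin 6)) ⊆ F := fun a _ => hcon a
  have := Set.ncard_le_ncard hsub (Set.toFinite F)
  rw [Set.ncard_univ, Nat.card_eq_fintype_card, Fintype.card_fin] at this
  omega

lemma three_in_image {V : Type} {c : V → Fin 6} {N : Set V} {x y z : V}
    (hx : x ∈ N) (hy : y ∈ N) (hz : z ∈ N)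
    (h1 : c x ≠ c y) (h2 : c x ≠ c z) (h3 : c y ≠ c z) (d : ℕ) :
    min 3 d ≤ (c '' N).ncard := by
  have hsub : ({c x, c y, c z} : Set (Fin 6)) ⊆ c '' N := by
    rintro t (rfl | rfl | rfl)
    · exact Set.mem_image_of_mem c hx
    · exact Set.mem_image_of_mem c hy
    · exact Set.mem_image_of_mem c hz
  have h3' : ({c x, c y, c z} : Set (Fin 6)).ncard = 3 :=
    Set.ncard_eq_three.mpr ⟨c x, c y, c z, h1, h2, h3, rfl⟩
  calc min 3 d ≤ 3 := min_le_left _ _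
    _ = _ := h3'.symm
    _ ≤ _ := Set.ncard_le_ncard hsub (Set.toFinite _)


/-- A minimal counterexample contains no two triangles v₁v₂v₃ and v₁v₃v₄ sharing the edge v₁v₃ with d(v₂) = d(v₃) = d(v₄) = 3 and d(v₁) ≥ 4. -/
theorem minCounterexample_no_adjacent_triangles_deg4_apex {V : Type} [Fintype V] (G : SimpleGraph V)
    (hplanar : IsPlanar G) (hcex : ¬ WDColorable G 3 6)
    (hminEdges : ∀ (W : Type) [Fintype W] (H : SimpleGraph W),
      IsPlanar H → H.edgeSet.ncard < G.edgeSet.ncard → WDColorable H 3 6)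
    (hminVerts : ∀ (W : Type) [Fintype W] (H : SimpleGraph W),
      IsPlanar H → ¬ WDColorable H 3 6 → H.edgeSet.ncard = G.edgeSet.ncard →
      Nat.card V ≤ Nat.card W) :
    ¬ ∃ v₁ v₂ v₃ v₄ : V,
      ([v₁, v₂, v₃, v₄] : List V).Pairwise (· ≠ ·) ∧
      G.Adj v₁ v₂ ∧ G.Adj v₂ v₃ ∧ G.Adj v₁ v₃ ∧ G.Adj v₃ v₄ ∧ G.Adj v₁ v₄ ∧
      deg G v₂ = 3 ∧ deg G v₃ = 3 ∧ deg G v₄ = 3 ∧ 4 ≤ deg G v₁ := by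
  classical
  rintro ⟨v₁, v₂, v₃, v₄, hpw, a12, a23, a13, a34, a14, d2, d3, d4, d1⟩
  simp only [List.pairwise_cons, List.mem_cons, List.not_mem_nil, List.mem_singleton] at hpw
  obtain ⟨hp1, hp2, hp3, -⟩ := hpw
  have n12 : v₁ ≠ v₂ := hp1 v₂ (by simp)
  have n13 : v₁ ≠ v₃ := hp1 v₃ (by simp)
  have n14 : v₁ ≠ v₄ := hp1 v₄ (by simp)
  have n23 : v₂ ≠ v₃ := hp2 v₃ (by simp)
  have n24 : v₂ ≠ v₄ := hp2 v₄ (by simp)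
  have n34 : v₃ ≠ v₄ := hp3 v₄ (by simp)
  -- third neighbor of v₂
  have hex2 : ∃ x, x ∈ G.neighborSet v₂ ∧ x ∉ ({v₁, v₃} : Set V) := by
    rw [← Set.not_subset]
    intro hsub
    have hle := Set.ncard_le_ncard hsub (Set.toFinite _)
    have h2 : ({v₁, v₃} : Set V).ncard ≤ 2 := by
      have := Set.ncard_insert_le v₁ ({v₃} : Set V)
      rw [Set.ncard_singleton] at this
      omega
    have hd : (G.neighborSet v₂).ncard = 3 := d2
    omega
  obtain ⟨x₂, hx2N, hx2n⟩ := hex2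
  simp only [Set.mem_insert_iff, Set.mem_singleton_iff, not_or] at hx2n
  obtain ⟨x21, x23⟩ := hx2n
  have x22 : x₂ ≠ v₂ := fun h => G.irrefl (h ▸ hx2N)
  have hN2 : G.neighborSet v₂ = {v₁, v₃, x₂} := by
    refine (Set.eq_of_subset_of_ncard_le ?_ ?_ (Set.toFinite _)).symm
    · rintro t (rfl | rfl | rfl)
      · exact a12.symm
      · exact a23
      · exact hx2N
    · have hd : (G.neighborSet v₂).ncard = 3 := d2
      rw [hd, Set.ncard_eq_three.mpr ⟨v₁, v₃, x₂, n13, Ne.symm x21, Ne.symm x23, rfl⟩]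
  -- third neighbor of v₄
  have hex4 : ∃ x, x ∈ G.neighborSet v₄ ∧ x ∉ ({v₁, v₃} : Set V) := by
    rw [← Set.not_subset]
    intro hsub
    have hle := Set.ncard_le_ncard hsub (Set.toFinite _)
    have h2 : ({v₁, v₃} : Set V).ncard ≤ 2 := by
      have := Set.ncard_insert_le v₁ ({v₃} : Set V)
      rw [Set.ncard_singleton] at this
      omega
    have hd : (G.neighborSet v₄).ncard = 3 := d4
    omega
  obtain ⟨x₄, hx4N, hx4n⟩ := hex4
  simp only [Set.mem_insert_iff, Set.mem_singleton_iff, not_or] at hx4n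
  obtain ⟨x41, x43⟩ := hx4n
  have x44 : x₄ ≠ v₄ := fun h => G.irrefl (h ▸ hx4N)
  have hN4 : G.neighborSet v₄ = {v₁, v₃, x₄} := by
    refine (Set.eq_of_subset_of_ncard_le ?_ ?_ (Set.toFinite _)).symm
    · rintro t (rfl | rfl | rfl)
      · exact a14.symm
      · exact a34.symm
      · exact hx4N
    · have hd : (G.neighborSet v₄).ncard = 3 := d4
      rw [hd, Set.ncard_eq_three.mpr ⟨v₁, v₃, x₄, n13, Ne.symm x41, Ne.symm x43, rfl⟩]
  have hN3 : G.neighborSet v₃ = {v₁, v₂, v₄} := by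
    refine (Set.eq_of_subset_of_ncard_le ?_ ?_ (Set.toFinite _)).symm
    · rintro t (rfl | rfl | rfl)
      · exact a13.symm
      · exact a23.symm
      · exact a34
    · have hd : (G.neighborSet v₃).ncard = 3 := d3
      rw [hd, Set.ncard_eq_three.mpr ⟨v₁, v₂, v₄, n12, n14, n24, rfl⟩]
  -- the reduced graph H
  set H := G.deleteEdges {s(v₂, v₃)} with hH
  have hHle : H ≤ G := SimpleGraph.deleteEdges_le _
  have hHplanar : IsPlanar H := isPlanar_mono hHle hplanar
  have hHlt : H.edgeSet.ncard < G.edgeSet.ncard := by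
    have he : s(v₂, v₃) ∈ G.edgeSet := a23
    rw [hH, SimpleGraph.edgeSet_deleteEdges]
    refine Set.ncard_lt_ncard ?_ (Set.toFinite _)
    refine (Set.ssubset_iff_of_subset Set.diff_subset).mpr ⟨s(v₂, v₃), he, ?_⟩
    simp
  obtain ⟨c, hc⟩ := hminEdges V H hHplanar hHlt
  -- neighborhoods in H
  have hH2 : H.neighborSet v₂ = {v₁, x₂} := by
    rw [hH, neighborSet_del_left G n23, hN2]
    ext t
    simp only [Set.mem_diff, Set.mem_insert_iff, Set.mem_singleton_iff]
    constructor
    · rintro ⟨rfl | rfl | rfl, ht⟩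
      · exact Or.inl rfl
      · exact absurd rfl ht
      · exact Or.inr rfl
    · rintro (rfl | rfl)
      · exact ⟨Or.inl rfl, n13⟩
      · exact ⟨Or.inr (Or.inr rfl), x23⟩
  have hswap : ({s(v₂, v₃)} : Set (Sym2 V)) = {s(v₃, v₂)} := by rw [Sym2.eq_swap]
  have hH3 : H.neighborSet v₃ = {v₁, v₄} := by
    rw [hH, hswap, neighborSet_del_left G (Ne.symm n23), hN3]
    ext t
    simp only [Set.mem_diff, Set.mem_insert_iff, Set.mem_singleton_iff]
    constructor
    · rintro ⟨rfl | rfl | rfl, ht⟩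
      · exact Or.inl rfl
      · exact absurd rfl ht
      · exact Or.inr rfl
    · rintro (rfl | rfl)
      · exact ⟨Or.inl rfl, n12⟩
      · exact ⟨Or.inr (Or.inr rfl), Ne.symm n24⟩
  have hHgen : ∀ v, v ≠ v₂ → v ≠ v₃ → H.neighborSet v = G.neighborSet v :=
    fun v h h' => neighborSet_del_ne G v h h'
  have hH4 : H.neighborSet v₄ = {v₁, v₃, x₄} := by
    rw [hHgen v₄ (Ne.symm n24) (Ne.symm n34), hN4]
  -- color facts from the coloring of H
  have A : c v₁ ≠ c x₂ := by
    have h := hc v₂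
    rw [hH2] at h
    have hd : deg H v₂ = 2 := by
      rw [deg, hH2, Set.ncard_pair (Ne.symm x21)]
    rw [hd] at h
    norm_num at h
    exact pair_distinct h
  have B : c v₁ ≠ c v₄ := by
    have h := hc v₃
    rw [hH3] at h
    have hd : deg H v₃ = 2 := by
      rw [deg, hH3, Set.ncard_pair n14]
    rw [hd] at h
    norm_num at h
    exact pair_distinct h
  have C : c v₁ ≠ c v₃ ∧ c v₁ ≠ c x₄ ∧ c v₃ ≠ c x₄ := by
    have h := hc v₄
    rw [hH4] at h
    have hd : deg H v₄ = 3 := by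
      rw [deg, hH4, Set.ncard_eq_three.mpr ⟨v₁, v₃, x₄, n13, Ne.symm x41, Ne.symm x43, rfl⟩]
    rw [hd] at h
    norm_num at h
    exact triple_distinct h
  obtain ⟨-, C2, -⟩ := C
  -- choose the two new colors
  set Px : Set (Fin 6) := c '' (G.neighborSet x₂ \ {v₂}) with hPx
  set Px' : Set (Fin 6) := if Px.ncard ≤ 2 then Px else ∅ with hPx'
  have hPx'card : Px'.ncard ≤ 2 := by
    rw [hPx']
    split_ifs with h
    · exact h
    · simp
  have hF2 : (({c v₁, c v₄} : Set (Fin 6)) ∪ Px').ncard ≤ 5 := by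
    have h1 : ({c v₁, c v₄} : Set (Fin 6)).ncard ≤ 2 := by
      have := Set.ncard_insert_le (c v₁) ({c v₄} : Set (Fin 6))
      rw [Set.ncard_singleton] at this
      omega
    have := Set.ncard_union_le ({c v₁, c v₄} : Set (Fin 6)) Px'
    omega
  obtain ⟨a, ha⟩ := exists_fresh hF2
  simp only [Set.mem_union, Set.mem_insert_iff, Set.mem_singleton_iff, not_or] at ha
  obtain ⟨⟨ha1, ha4⟩, haPx⟩ := ha
  have hF3 : (insert (c v₁) (insert (c v₄) (insert (c x₂) (insert (c x₄)
      ({a} : Set (Fin 6)))))).ncard ≤ 5 := by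
    have h1 := Set.ncard_insert_le (c v₁) (insert (c v₄) (insert (c x₂) (insert (c x₄)
      ({a} : Set (Fin 6)))))
    have h2 := Set.ncard_insert_le (c v₄) (insert (c x₂) (insert (c x₄) ({a} : Set (Fin 6))))
    have h3 := Set.ncard_insert_le (c x₂) (insert (c x₄) ({a} : Set (Fin 6)))
    have h4 := Set.ncard_insert_le (c x₄) ({a} : Set (Fin 6))
    have h5 : ({a} : Set (Fin 6)).ncard = 1 := Set.ncard_singleton a
    omega
  obtain ⟨b, hb⟩ := exists_fresh hF3
  simp only [Set.mem_insert_iff, Set.mem_singleton_iff, not_or] at hb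
  obtain ⟨hb1, hb4, hbx2, hbx4, hba⟩ := hb
  -- the new coloring of G
  set c' : V → Fin 6 := fun v => if v = v₂ then a else if v = v₃ then b else c v with hc'def
  have hc'2 : c' v₂ = a := by simp [hc'def]
  have hc'3 : c' v₃ = b := by simp [hc'def, Ne.symm n23]
  have hc'o : ∀ v, v ≠ v₂ → v ≠ v₃ → c' v = c v := by
    intro v h h'
    simp [hc'def, h, h']
  refine hcex ⟨c', fun v => ?_⟩
  by_cases e1 : v = v₁
  · subst e1
    refine three_in_image (c := c') a12 a13 a14 ?_ ?_ ?_ _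
    · rw [hc'2, hc'3]
      exact Ne.symm hba
    · rw [hc'2, hc'o v₄ (Ne.symm n24) (Ne.symm n34)]
      exact ha4
    · rw [hc'3, hc'o v₄ (Ne.symm n24) (Ne.symm n34)]
      exact hb4
  by_cases e2 : v = v₂
  · subst e2
    refine three_in_image (c := c') a12.symm a23 hx2N ?_ ?_ ?_ _
    · rw [hc'o v₁ n12 n13, hc'3]
      exact Ne.symm hb1
    · rw [hc'o v₁ n12 n13, hc'o x₂ x22 x23]
      exact A
    · rw [hc'3, hc'o x₂ x22 x23]
      exact hbx2
  by_cases e3 : v = v₃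
  · subst e3
    refine three_in_image (c := c') a13.symm a23.symm a34 ?_ ?_ ?_ _
    · rw [hc'o v₁ n12 n13, hc'2]
      exact Ne.symm ha1
    · rw [hc'o v₁ n12 n13, hc'o v₄ (Ne.symm n24) (Ne.symm n34)]
      exact B
    · rw [hc'2, hc'o v₄ (Ne.symm n24) (Ne.symm n34)]
      exact ha4
  by_cases e4 : v = v₄
  · subst e4
    by_cases hx42 : x₄ = v₂
    · refine three_in_image (c := c') a14.symm a34.symm hx4N ?_ ?_ ?_ _
      · rw [hc'o v₁ n12 n13, hc'3]
        exact Ne.symm hb1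
      · rw [hc'o v₁ n12 n13, hx42, hc'2]
        exact Ne.symm ha1
      · rw [hc'3, hx42, hc'2]
        exact hba
    · refine three_in_image (c := c') a14.symm a34.symm hx4N ?_ ?_ ?_ _
      · rw [hc'o v₁ n12 n13, hc'3]
        exact Ne.symm hb1
      · rw [hc'o v₁ n12 n13, hc'o x₄ hx42 x43]
        exact C2
      · rw [hc'3, hc'o x₄ hx42 x43]
        exact hbx4
  by_cases e5 : v = x₂
  · rw [show v = x₂ from e5]
    have x24 : x₂ ≠ v₄ := fun h => e4 (e5.trans h)
    have hv3n : v₃ ∉ G.neighborSet x₂ := by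
      intro hmem
      have hmem' : x₂ ∈ G.neighborSet v₃ := G.adj_symm hmem
      rw [hN3] at hmem'
      simp only [Set.mem_insert_iff, Set.mem_singleton_iff] at hmem'
      rcases hmem' with h | h | h
      · exact x21 h
      · exact x22 h
      · exact x24 h
    have hv2m : v₂ ∈ G.neighborSet x₂ := G.adj_symm hx2N
    have hdec : G.neighborSet x₂ = insert v₂ (G.neighborSet x₂ \ {v₂}) := by
      rw [Set.insert_diff_singleton, Set.insert_eq_self.mpr hv2m]
    have him : c' '' G.neighborSet x₂ = insert a Px := by
      conv_lhs => rw [hdec]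
      rw [Set.image_insert_eq, hc'2, hPx]
      congr 1
      apply Set.image_congr
      intro x hx
      refine hc'o x hx.2 ?_
      intro hx3
      exact hv3n (hx3 ▸ hx.1)
    have hdeg : deg G x₂ = deg H x₂ := by
      rw [deg, deg, hHgen x₂ x22 x23]
    have hcx := hc x₂
    rw [hHgen x₂ x22 x23, ← hdeg] at hcx
    rw [him]
    by_cases hsmall : Px.ncard ≤ 2
    · have haPx2 : a ∉ Px := by
        rw [hPx'] at haPx
        rw [if_pos hsmall] at haPx
        exact haPx
      have h1 : (insert a Px).ncard = Px.ncard + 1 :=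
        Set.ncard_insert_of_notMem haPx2 (Set.toFinite _)
      have h2 : (c '' G.neighborSet x₂).ncard ≤ Px.ncard + 1 := by
        conv_lhs => rw [hdec]
        rw [Set.image_insert_eq]
        exact Set.ncard_insert_le _ _
      calc min 3 (deg G x₂) ≤ (c '' G.neighborSet x₂).ncard := hcx
        _ ≤ Px.ncard + 1 := h2
        _ = (insert a Px).ncard := h1.symm
    · push_neg at hsmall
      calc min 3 (deg G x₂) ≤ 3 := min_le_left _ _
        _ ≤ Px.ncard := hsmall
        _ ≤ (insert a Px).ncard :=
            Set.ncard_le_ncard (Set.subset_insert _ _) (Set.toFinite _)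
  · -- generic vertex
    have h2n : ∀ x ∈ G.neighborSet v, x ≠ v₂ := by
      intro x hx hx2
      have hmem' : v ∈ G.neighborSet v₂ := G.adj_symm (hx2 ▸ hx)
      rw [hN2] at hmem'
      simp only [Set.mem_insert_iff, Set.mem_singleton_iff] at hmem'
      rcases hmem' with h | h | h
      · exact e1 h
      · exact e3 h
      · exact e5 h
    have h3n : ∀ x ∈ G.neighborSet v, x ≠ v₃ := by
      intro x hx hx3
      have hmem' : v ∈ G.neighborSet v₃ := G.adj_symm (hx3 ▸ hx)
      rw [hN3] at hmem'
      simp only [Set.mem_insert_iff, Set.mem_singleton_iff] at hmem'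
      rcases hmem' with h | h | h
      · exact e1 h
      · exact e2 h
      · exact e4 h
    have him : c' '' G.neighborSet v = c '' G.neighborSet v :=
      Set.image_congr (fun x hx => hc'o x (h2n x hx) (h3n x hx))
    have hnb : H.neighborSet v = G.neighborSet v := hHgen v e2 e3
    have hdeg : deg G v = deg H v := by rw [deg, deg, hnb]
    rw [him, ← hnb, hdeg]
    exact hc v
end
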